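/- Filtering preserves shift-orthonormality across levels: let m ≥ 1, N divisible by 2^{m+1}, ψ ∈ Π[N] with 2^m-shift-orthonormal translates (⟨ψ[·−2^m k], ψ[·−2^m n]⟩ = δ[k−n]), and let h be an N/2^m-periodic filter whose frequency response satisfies |ĥ[n]|² + |ĥ[n + N/2^{m+1}]|² = 2 for all n. Define ψ'[n] = ∑_{k=0}^{N/2^m−1} h[k] ψ[n − 2^m k]. Then the 2^{m+1}-shifts of ψ' are orthonormal: ⟨ψ'[·−2^{m+1} k], ψ'[·−2^{m+1} n]⟩ = δ[k−n]. -/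

import Mathlib

open Finset Complex

/-- The primitive `M`-th root of unity `ω = e^{2πi/M}`. -/
noncomputable def omegaN (M : ℕ) : ℂ := Complex.exp (2 * Real.pi * Complex.I / M)

/-- The DFT of a real `M`-periodic filter `h`:
`ĥ[n] = ∑_{k=0}^{M-1} h[k] e^{−2πikn/M}`. -/
noncomputable def filterDFT (M : ℕ) (h : ℤ → ℝ) (n : ℤ) : ℂ :=
  ∑ k ∈ Finset.range M, (h k : ℂ) * omegaN M ^ (-((k : ℤ) * n))

/-! Write `M = N/2^m = 2L`. Extended to all integer shifts by periodicity, the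
orthonormality of the `2^m`-shifts of `ψ` collapses the double sum obtained by expanding
`⟨ψ'[· - 2^{m+1}k], ψ'[· - 2^{m+1}n]⟩` to the autocorrelation `∑ₗ h[l] h[l + 2(k-n)]` of the
filter at an even lag. Times `M`, that autocorrelation is `∑_{p<M} |ĥ[p]|² ω_M^{-2(k-n)p}`;
pairing `p` with `p + L` (which leaves `ω_M^{-2(k-n)p}` unchanged) and applying the half-band
condition turns it into `2 ∑_{p<L} ω_L^{-(k-n)p} = M δ[k-n]`. -/

open Function

lemma intCast_dvd_natCast_sub_iff_eq {M k n : ℕ} (hk : k < M) (hn : n < M) :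
    (M : ℤ) ∣ (n : ℤ) - k ↔ k = n := by
  rw [← Nat.modEq_iff_dvd]
  exact ⟨fun h => h.eq_of_lt_of_lt hk hn, fun h => h ▸ rfl⟩

lemma exists_lt_intCast_dvd_sub {M : ℕ} (hM : 0 < M) (t : ℤ) :
    ∃ r : ℕ, r < M ∧ (M : ℤ) ∣ (r : ℤ) - t := by
  have hM' : (0 : ℤ) < M := by exact_mod_cast hM
  refine ⟨(t % M).toNat, by have := Int.emod_lt_of_pos t hM'; omega, ?_⟩
  rw [Int.toNat_of_nonneg (Int.emod_nonneg t hM'.ne')]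
  exact ⟨-(t / M), by rw [Int.emod_def]; ring⟩

lemma Function.Periodic.eq_of_dvd_sub {α : Type*} {g : ℤ → α} {c : ℤ} (hg : Periodic g c)
    {a b : ℤ} (h : c ∣ a - b) : g a = g b := by
  obtain ⟨q, hq⟩ := h
  rw [← hg.sub_int_mul_eq q, Int.cast_id]
  congr 1
  linarith

lemma Function.Periodic.sum_range_ite_dvd_sub {α : Type*} [AddCommMonoid α] {g : ℤ → α}
    {M : ℕ} (hg : Periodic g M) (hM : 0 < M) (t : ℤ) :
    ∑ l ∈ range M, (if (M : ℤ) ∣ (l : ℤ) - t then g l else 0) = g t := by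
  obtain ⟨r, hr, hrt⟩ := exists_lt_intCast_dvd_sub hM t
  rw [sum_eq_single_of_mem r (mem_range.2 hr), if_pos hrt, hg.eq_of_dvd_sub hrt]
  intro l hl hne
  refine if_neg fun hlt => hne ?_
  exact ((intCast_dvd_natCast_sub_iff_eq hr (mem_range.1 hl)).1
    (by simpa using dvd_sub hlt hrt)).symm

section ShiftOrthonormal

variable {N M : ℕ} {s : ℤ} {ψ : ℤ → ℝ}

lemma sum_shift_mul_shift_eq_ite_dvd (hψ : Periodic ψ N) (hNM : (N : ℤ) = s * M) (hM : 0 < M)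
    (hortho : ∀ k n : ℕ, k < M → n < M →
      ∑ j ∈ range N, ψ ((j : ℤ) - s * k) * ψ ((j : ℤ) - s * n) = if k = n then 1 else 0)
    (a b : ℤ) :
    ∑ j ∈ range N, ψ ((j : ℤ) - s * a) * ψ ((j : ℤ) - s * b) =
      if (M : ℤ) ∣ b - a then 1 else 0 := by
  obtain ⟨ra, hra, ha⟩ := exists_lt_intCast_dvd_sub hM a
  obtain ⟨rb, hrb, hb⟩ := exists_lt_intCast_dvd_sub hM b
  have hreduce : ∀ (x c : ℤ) (r : ℕ), (M : ℤ) ∣ (r : ℤ) - c →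
      ψ (x - s * c) = ψ (x - s * r) := fun x c r h => hψ.eq_of_dvd_sub <| by
    rw [hNM, show x - s * c - (x - s * r) = s * (r - c) by ring]
    exact mul_dvd_mul_left s h
  have hmod : (M : ℤ) ∣ b - a ↔ (M : ℤ) ∣ (rb : ℤ) - ra := by
    have ha' := Int.modEq_iff_dvd.2 ha
    have hb' := Int.modEq_iff_dvd.2 hb
    rw [← Int.modEq_iff_dvd, ← Int.modEq_iff_dvd]
    exact ⟨fun h => ha'.symm.trans (h.trans hb'), fun h => ha'.trans (h.trans hb'.symm)⟩
  simp_rw [hreduce _ a ra ha, hreduce _ b rb hb, hortho ra rb hra hrb, hmod,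
    intCast_dvd_natCast_sub_iff_eq hra hrb]

lemma sum_filter_mul_filter (hψ : Periodic ψ N) (hNM : (N : ℤ) = s * M) (hM : 0 < M)
    (hortho : ∀ k n : ℕ, k < M → n < M →
      ∑ j ∈ range N, ψ ((j : ℤ) - s * k) * ψ ((j : ℤ) - s * n) = if k = n then 1 else 0)
    {h : ℤ → ℝ} (hh : Periodic h M) (a b : ℤ) :
    ∑ j ∈ range N, (∑ l ∈ range M, h l * ψ ((j : ℤ) - s * a - s * l)) *
        (∑ l ∈ range M, h l * ψ ((j : ℤ) - s * b - s * l)) =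
      ∑ l ∈ range M, h l * h (l + (a - b)) := by
  calc _ = ∑ l ∈ range M, ∑ l' ∈ range M, h l * h l' *
        ∑ j ∈ range N, ψ ((j : ℤ) - s * (a + l)) * ψ ((j : ℤ) - s * (b + l')) := by
        simp_rw [sum_mul_sum, mul_sum]
        rw [sum_comm]
        refine sum_congr rfl fun l _ => ?_
        rw [sum_comm]
        refine sum_congr rfl fun l' _ => sum_congr rfl fun j _ => ?_
        rw [mul_add, mul_add, ← sub_sub, ← sub_sub]
        ring
    _ = ∑ l ∈ range M, h l * ∑ l' ∈ range M,
          if (M : ℤ) ∣ (l' : ℤ) - (l + (a - b)) then h l' else 0 := by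
        refine sum_congr rfl fun l _ => ?_
        rw [mul_sum]
        refine sum_congr rfl fun l' _ => ?_
        rw [sum_shift_mul_shift_eq_ite_dvd hψ hNM hM hortho,
          show b + l' - (a + l) = (l' : ℤ) - (l + (a - b)) by ring]
        split_ifs <;> ring
    _ = ∑ l ∈ range M, h l * h (l + (a - b)) := by
        simp_rw [hh.sum_range_ite_dvd_sub hM]

end ShiftOrthonormal

lemma IsPrimitiveRoot.sum_range_zpow_mul {K : Type*} [Field K] {ζ : K} {M : ℕ}
    (hζ : IsPrimitiveRoot ζ M) (c : ℤ) :
    ∑ p ∈ range M, ζ ^ (c * p) = if (M : ℤ) ∣ c then (M : K) else 0 := by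
  simp_rw [zpow_mul, zpow_natCast]
  split_ifs with hc
  · simp [(hζ.zpow_eq_one_iff_dvd c).2 hc]
  · have hne : ζ ^ c ≠ 1 := mt (hζ.zpow_eq_one_iff_dvd c).1 hc
    rw [geom_sum_eq hne, ← zpow_natCast, ← zpow_mul, mul_comm, zpow_mul, hζ.zpow_eq_one,
      one_zpow, sub_self, zero_div]

lemma isPrimitiveRoot_omegaN {M : ℕ} (hM : M ≠ 0) : IsPrimitiveRoot (omegaN M) M :=
  Complex.isPrimitiveRoot_exp M hM

lemma conj_omegaN (M : ℕ) : (starRingEnd ℂ) (omegaN M) = (omegaN M)⁻¹ := by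
  rw [omegaN, ← Complex.exp_conj, ← Complex.exp_neg]
  congr 1
  simp only [map_div₀, map_mul, Complex.conj_I, map_ofNat, Complex.conj_ofReal,
    Complex.conj_natCast]
  ring

lemma omegaN_two_mul_sq (L : ℕ) : omegaN (2 * L) ^ 2 = omegaN L := by
  rcases eq_or_ne L 0 with rfl | hL
  · simp [omegaN]
  rw [omegaN, omegaN, ← Complex.exp_nat_mul]
  congr 1
  push_cast
  field_simp

lemma conj_filterDFT (M : ℕ) (h : ℤ → ℝ) (p : ℤ) :
    (starRingEnd ℂ) (filterDFT M h p) =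
      ∑ l ∈ range M, (h l : ℂ) * omegaN M ^ ((l : ℤ) * p) := by
  simp_rw [filterDFT, map_sum, map_mul, map_zpow₀, conj_omegaN, Complex.conj_ofReal, inv_zpow',
    neg_neg]

lemma sum_norm_filterDFT_sq_mul_zpow {M : ℕ} (hM : 0 < M) {h : ℤ → ℝ} (hh : Periodic h M)
    (a : ℤ) :
    ∑ p ∈ range M, ((‖filterDFT M h p‖ ^ 2 : ℝ) : ℂ) * omegaN M ^ (-a * p) =
      ((M * ∑ l ∈ range M, h l * h (l + a) : ℝ) : ℂ) := by
  have hζ := isPrimitiveRoot_omegaN hM.ne'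
  have hζ0 : omegaN M ≠ 0 := hζ.ne_zero hM.ne'
  have hMh : Periodic (fun x : ℤ => (M : ℂ) * h x) M := fun x => by simp only [hh x]
  calc _ = ∑ p ∈ range M, ∑ l ∈ range M, ∑ l' ∈ range M,
        (h l * h l' : ℂ) * omegaN M ^ (((l' : ℤ) - (l + a)) * p) := by
        refine sum_congr rfl fun p _ => ?_
        rw [← Complex.normSq_eq_norm_sq, ← Complex.mul_conj, conj_filterDFT, filterDFT,
          sum_mul_sum, sum_mul]
        refine sum_congr rfl fun l _ => ?_
        rw [sum_mul]
        refine sum_congr rfl fun l' _ => ?_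
        rw [show ((l' : ℤ) - (l + a)) * p = -(l * p) + l' * p + -a * p by ring,
          zpow_add₀ hζ0, zpow_add₀ hζ0]
        ring
    _ = ∑ l ∈ range M, (h l : ℂ) * ∑ l' ∈ range M,
          if (M : ℤ) ∣ (l' : ℤ) - (l + a) then (M : ℂ) * h l' else 0 := by
        rw [sum_comm]
        refine sum_congr rfl fun l _ => ?_
        rw [sum_comm, mul_sum]
        refine sum_congr rfl fun l' _ => ?_
        rw [← mul_sum, hζ.sum_range_zpow_mul]
        split_ifs <;> ring
    _ = _ := by
        simp_rw [hMh.sum_range_ite_dvd_sub hM]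
        push_cast
        rw [mul_sum]
        exact sum_congr rfl fun l _ => by ring

lemma sum_mul_shift_two_mul_eq_ite {M L : ℕ} (hML : M = 2 * L) (hL : 0 < L) {h : ℤ → ℝ}
    (hh : Periodic h M)
    (hfilter : ∀ n : ℤ, ‖filterDFT M h n‖ ^ 2 + ‖filterDFT M h (n + L)‖ ^ 2 = 2) (d : ℤ) :
    ∑ l ∈ range M, h l * h (l + 2 * d) = if (L : ℤ) ∣ d then 1 else 0 := by
  subst hML
  have hζ := isPrimitiveRoot_omegaN (M := 2 * L) (by omega)
  have hζ0 : omegaN (2 * L) ≠ 0 := hζ.ne_zero (by omega)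
  have hperiod : ∀ p : ℕ, omegaN (2 * L) ^ (-(2 * d) * ((L + p : ℕ) : ℤ)) =
      omegaN (2 * L) ^ (-(2 * d) * p) := fun p => by
    rw [show -(2 * d) * ((L + p : ℕ) : ℤ) = -(2 * d) * p + ((2 * L : ℕ) : ℤ) * (-d) by
        push_cast; ring, zpow_add₀ hζ0, zpow_mul _ _ (-d), hζ.zpow_eq_one, one_zpow, mul_one]
  have hsq : ∀ p : ℕ, omegaN (2 * L) ^ (-(2 * d) * p) = omegaN L ^ (-d * p) := fun p => by
    rw [show -(2 * d) * p = 2 * (-d * p) by ring, zpow_mul, zpow_ofNat, omegaN_two_mul_sq]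
  suffices h2 : ((((2 * L : ℕ) : ℝ) * ∑ l ∈ range (2 * L), h l * h (l + 2 * d) : ℝ) : ℂ) =
      ((((2 * L : ℕ) : ℝ) * if (L : ℤ) ∣ d then 1 else 0 : ℝ) : ℂ) from
    mul_left_cancel₀ (Nat.cast_ne_zero.2 (by omega)) (Complex.ofReal_injective h2)
  calc _ = ∑ p ∈ range (2 * L), ((‖filterDFT (2 * L) h p‖ ^ 2 : ℝ) : ℂ) *
        omegaN (2 * L) ^ (-(2 * d) * p) := by
        rw [sum_norm_filterDFT_sq_mul_zpow (by omega) hh]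
    _ = ∑ p ∈ range L,
          ((‖filterDFT (2 * L) h p‖ ^ 2 + ‖filterDFT (2 * L) h (p + L)‖ ^ 2 : ℝ) : ℂ) *
            omegaN (2 * L) ^ (-(2 * d) * p) := by
        rw [two_mul, sum_range_add, ← sum_add_distrib, ← two_mul]
        refine sum_congr rfl fun p _ => ?_
        rw [hperiod, add_comm L p]
        push_cast
        ring
    _ = 2 * ∑ p ∈ range L, omegaN L ^ (-d * p) := by
        simp_rw [hfilter, hsq, mul_sum]
        push_cast
        rfl
    _ = _ := by
        rw [(isPrimitiveRoot_omegaN hL.ne').sum_range_zpow_mul]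
        simp only [dvd_neg]
        split_ifs <;> push_cast <;> ring

theorem filtered_shift_orthonormal_general (N m : ℕ)
    (hdvd : 2 ^ (m + 1) ∣ N)
    (ψ : ℤ → ℝ) (h : ℤ → ℝ)
    (hψper : ∀ k : ℤ, ψ (k + N) = ψ k)
    (hhper : ∀ k : ℤ, h (k + (N / 2 ^ m : ℕ)) = h k)
    (hfilter : ∀ n : ℤ, ‖filterDFT (N / 2 ^ m) h n‖ ^ 2 +
      ‖filterDFT (N / 2 ^ m) h (n + (N / 2 ^ (m + 1) : ℕ))‖ ^ 2 = 2)
    (hortho : ∀ k n : ℕ, k < N / 2 ^ m → n < N / 2 ^ m →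
      ∑ j ∈ Finset.range N, ψ ((j : ℤ) - 2 ^ m * k) * ψ ((j : ℤ) - 2 ^ m * n) =
        if k = n then 1 else 0) :
    ∀ k n : ℕ, k < N / 2 ^ (m + 1) → n < N / 2 ^ (m + 1) →
      ∑ j ∈ Finset.range N,
          (∑ l ∈ Finset.range (N / 2 ^ m),
            h l * ψ (((j : ℤ) - 2 ^ (m + 1) * k) - 2 ^ m * l)) *
          (∑ l ∈ Finset.range (N / 2 ^ m),
            h l * ψ (((j : ℤ) - 2 ^ (m + 1) * n) - 2 ^ m * l)) =
        if k = n then 1 else 0 := by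
  intro k n hk hn
  have hML : N / 2 ^ m = 2 * (N / 2 ^ (m + 1)) := by
    obtain ⟨L, rfl⟩ := hdvd
    rw [Nat.mul_div_cancel_left _ (by positivity), pow_succ, mul_assoc,
      Nat.mul_div_cancel_left _ (by positivity)]
  have hNM : (N : ℤ) = 2 ^ m * (N / 2 ^ m : ℕ) := by
    exact_mod_cast (Nat.mul_div_cancel' (dvd_trans (pow_dvd_pow 2 m.le_succ) hdvd)).symm
  have hshift : ∀ x : ℕ, (2 : ℤ) ^ (m + 1) * x = 2 ^ m * (2 * x) := fun x => by ring
  simp only [hshift]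
  rw [sum_filter_mul_filter hψper hNM (by omega) hortho hhper, ← mul_sub,
    sum_mul_shift_two_mul_eq_ite hML (by omega) hhper hfilter]
  exact if_congr ((intCast_dvd_natCast_sub_iff_eq hn hk).trans eq_comm) rfl rfl

/-- Filtering preserves shift-orthonormality across decomposition levels:
if the `2^m`-shifts of `ψ` are orthonormal and the `N/2^m`-periodic filter `h`
satisfies `|ĥ[n]|² + |ĥ[n+N/2^{m+1}]|² = 2`, then the `2^{m+1}`-shifts of
`ψ'[n] = ∑_k h[k] ψ[n − 2^m k]` are orthonormal. -/
theorem filtered_shift_orthonormal (N m : ℕ) (hm : 1 ≤ m)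
    (hdvd : 2 ^ (m + 1) ∣ N) (hN : 0 < N)
    (ψ : ℤ → ℝ) (h : ℤ → ℝ)
    (hψper : ∀ k : ℤ, ψ (k + N) = ψ k)
    (hhper : ∀ k : ℤ, h (k + (N / 2 ^ m : ℕ)) = h k)
    (hfilter : ∀ n : ℤ, ‖filterDFT (N / 2 ^ m) h n‖ ^ 2 +
      ‖filterDFT (N / 2 ^ m) h (n + (N / 2 ^ (m + 1) : ℕ))‖ ^ 2 = 2)
    (hortho : ∀ k n : ℕ, k < N / 2 ^ m → n < N / 2 ^ m →
      ∑ j ∈ Finset.range N, ψ ((j : ℤ) - 2 ^ m * k) * ψ ((j : ℤ) - 2 ^ m * n) =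
        if k = n then 1 else 0) :
    ∀ k n : ℕ, k < N / 2 ^ (m + 1) → n < N / 2 ^ (m + 1) →
      ∑ j ∈ Finset.range N,
          (∑ l ∈ Finset.range (N / 2 ^ m),
            h l * ψ (((j : ℤ) - 2 ^ (m + 1) * k) - 2 ^ m * l)) *
          (∑ l ∈ Finset.range (N / 2 ^ m),
            h l * ψ (((j : ℤ) - 2 ^ (m + 1) * n) - 2 ^ m * l)) =
        if k = n then 1 else 0 :=
  filtered_shift_orthonormal_general N m hdvd ψ h hψper hhper hfilter hortho
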